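/- For every hull A ⊂ ℍ, as y → ∞ one has the asymptotic expansion crad(ℍ \ A, iy)/crad(ℍ, iy) = 1 − 2·hcap(A)/y² + o(y^{−2}); equivalently, lim_{y→∞} y²·(1 − crad(ℍ \ A, iy)/(2y)) = 2·hcap(A). -/

import Mathlib

open Complex MeasureTheory Set Filter Metric Bornology Topology

noncomputable section

/-- The upper half-plane `ℍ = {z ∈ ℂ : Im z > 0}`. -/
def UHP : Set ℂ := {z : ℂ | 0 < z.im}

/-- The open unit disk `𝔻 = {z ∈ ℂ : |z| < 1}`. -/
def unitDisk : Set ℂ := Metric.ball (0 : ℂ) 1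

/-- The annulus `{z ∈ ℂ : 1/2 < |z| < 1}`. -/
def annulus : Set ℂ := {z : ℂ | 1 / 2 < ‖z‖ ∧ ‖z‖ < 1}

/-- The hyperbolic distance on the upper half-plane (density `|dz| / Im z`):
`d(z,w) = 2 arsinh (|z - w| / (2 √(Im z · Im w)))`. -/
def uhpDist (z w : ℂ) : ℝ :=
  2 * Real.arsinh (‖z - w‖ / (2 * Real.sqrt (z.im * w.im)))

/-- The hyperbolic distance on the unit disk (density `2|dz| / (1 - |z|²)`):
`d(z,w) = 2 artanh ρ = log ((1 + ρ)/(1 - ρ))` with `ρ = |(z - w)/(1 - w̄ z)|`. -/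
def diskDist (z w : ℂ) : ℝ :=
  Real.log ((1 + ‖(z - w) / (1 - (starRingEnd ℂ) w * z)‖) /
    (1 - ‖(z - w) / (1 - (starRingEnd ℂ) w * z)‖))

/-- The closed hyperbolic neighborhood of radius one of `A` inside the upper half-plane:
`N(A) = {z ∈ ℍ : dist_hyp(z, A) ≤ 1}`. -/
def uhpHypNbhd (A : Set ℂ) : Set ℂ :=
  {z ∈ UHP | (⨅ w : A, ENNReal.ofReal (uhpDist z ↑w)) ≤ 1}

/-- The closed hyperbolic neighborhood of radius one of `B` inside the unit disk:
`N(B) = {z ∈ 𝔻 : dist_hyp(z, B) ≤ 1}`. -/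
def diskHypNbhd (B : Set ℂ) : Set ℂ :=
  {z ∈ unitDisk | (⨅ w : B, ENNReal.ofReal (diskDist z ↑w)) ≤ 1}

/-- A hull: a bounded subset of the upper half-plane such that `ℍ \ A` is a
simply connected region. -/
def IsHull (A : Set ℂ) : Prop :=
  A ⊆ UHP ∧ IsBounded A ∧ IsOpen (UHP \ A) ∧ SimplyConnectedSpace ↥(UHP \ A)

/-- `f` is a conformal map of `U` onto `V`: holomorphic on `U` and a bijection of `U` onto `V`. -/
def IsConformalMapOn (f : ℂ → ℂ) (U V : Set ℂ) : Prop :=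
  DifferentiableOn ℂ f U ∧ Set.BijOn f U V

/-- `g` is the hydrodynamically normalized conformal map of `ℍ \ A` onto `ℍ`:
conformal and `g(z) - z → 0` as `z → ∞` (which pins down `g` uniquely,
given that `z (g z - z)` has a finite limit). -/
def IsHydroMap (A : Set ℂ) (g : ℂ → ℂ) : Prop :=
  IsConformalMapOn g (UHP \ A) UHP ∧
    Tendsto (fun z => g z - z) (Bornology.cobounded ℂ ⊓ 𝓟 (UHP \ A)) (𝓝 0)

/-- `h` is the half-plane capacity of the hull `A`, witnessed by the hydrodynamically
normalized map `g`: `h = lim_{z → ∞} z (g_A(z) - z)`. -/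
def HasHcap (A : Set ℂ) (g : ℂ → ℂ) (h : ℝ) : Prop :=
  IsHydroMap A g ∧
    Tendsto (fun z => z * (g z - z)) (Bornology.cobounded ℂ ⊓ 𝓟 (UHP \ A)) (𝓝 (h : ℂ))

end

noncomputable section

/-!
Put `w = g(iy)` and `T_w(z) = (z - w) / (z - w̄)`. Then `T_w ∘ g ∘ f_y` is a conformal
automorphism of `𝔻` fixing `0`; the Schwarz lemma, applied to it and to its (holomorphic)
inverse, shows that its derivative at `0` has modulus `1`, and the chain rule turns this into
`crad(ℍ \ A, iy) = 2 Im g(iy) / |g'(iy)|`.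

With `F(z) = z (g(z) - z) → hcap(A)` one has `y (y - Im g(iy)) = Re F(iy)` and
`y² (g'(iy) - 1) = F(iy) - i y F'(iy)`, where `y F'(iy) → 0` by the Cauchy estimate on the disk
of radius `y / 2` about `iy`. Numerator and denominator of the formula for the conformal radius
are thus known up to `o(y⁻²)` relative errors, which gives the limit `2 hcap(A)`.
-/

theorem AnalyticAt.exists_eventuallyEq_pow {g : ℂ → ℂ} {c : ℂ} (hg : AnalyticAt ℂ g c)
    (hgc : g c ≠ 0) {n : ℕ} (hn : n ≠ 0) :
    ∃ r : ℂ → ℂ, AnalyticAt ℂ r c ∧ r c ≠ 0 ∧ ∀ᶠ z in 𝓝 c, r z ^ n = g z := by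
  refine ⟨fun z => Complex.exp ((n : ℂ)⁻¹ * (Complex.log (g z / g c) + Complex.log (g c))), ?_,
    exp_ne_zero _, ?_⟩
  · refine analyticAt_cexp.comp (analyticAt_const.mul (AnalyticAt.add ?_ analyticAt_const))
    exact (hg.div analyticAt_const hgc).clog (by simp [hgc, one_mem_slitPlane])
  · filter_upwards [hg.continuousAt.eventually_ne hgc] with z hz
    rw [← exp_nat_mul, ← mul_assoc, mul_inv_cancel₀ (Nat.cast_ne_zero.mpr hn), one_mul,
      exp_add, exp_log (div_ne_zero hz hgc), exp_log hgc, div_mul_cancel₀ _ hgc]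

theorem AnalyticAt.exists_eventuallyEq_pow_of_analyticOrderAt {f : ℂ → ℂ} {c : ℂ}
    (hf : AnalyticAt ℂ f c) {n : ℕ} (hn : n ≠ 0) (hord : analyticOrderAt f c = n) :
    ∃ φ : ℂ → ℂ, ∃ φ' : ℂ, φ' ≠ 0 ∧ HasStrictDerivAt φ φ' c ∧ φ c = 0 ∧
      f =ᶠ[𝓝 c] fun z => φ z ^ n := by
  obtain ⟨g, hg, hgc, hfg⟩ := hf.analyticOrderAt_eq_natCast.mp hord
  obtain ⟨r, hr, hrc, hrg⟩ := hg.exists_eventuallyEq_pow hgc hn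
  refine ⟨fun z => (z - c) * r z, r c, hrc, ?_, by simp, ?_⟩
  · simpa using HasStrictDerivAt.fun_mul ((hasStrictDerivAt_id c).sub_const c) hr.hasStrictDerivAt
  · filter_upwards [hfg, hrg] with z hfz hrz
    rw [hfz, mul_pow, hrz, smul_eq_mul]

theorem not_injOn_of_eventuallyEq_pow {f φ : ℂ → ℂ} {φ' c : ℂ} (hφ' : φ' ≠ 0)
    (hφ : HasStrictDerivAt φ φ' c) (hφc : φ c = 0) {n : ℕ} (hn : 2 ≤ n)
    (hf : f =ᶠ[𝓝 c] fun z => φ z ^ n) {s : Set ℂ} (hs : s ∈ 𝓝 c) : ¬ InjOn f s := by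
  intro hinj
  have himage : φ '' {z ∈ s | f z = φ z ^ n} ∈ 𝓝 0 := by
    rw [← hφc, ← hφ.map_nhds_eq hφ']
    exact image_mem_map (inter_mem hs hf)
  obtain ⟨δ, hδ, hball⟩ := Metric.mem_nhds_iff.mp himage
  -- `w` and `ζ w` have the same `n`-th power for a primitive `n`-th root of unity `ζ`.
  have hζ := isPrimitiveRoot_exp n (by omega)
  set ζ := exp (2 * Real.pi * I / n)
  set w : ℂ := ((δ / 2 : ℝ) : ℂ)
  have hw : ‖w‖ = δ / 2 := by simp [w, abs_of_pos hδ]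
  obtain ⟨z₁, ⟨hz₁, hfz₁⟩, hφz₁⟩ := hball (show w ∈ ball 0 δ by
    rw [mem_ball_zero_iff, hw]; linarith)
  obtain ⟨z₂, ⟨hz₂, hfz₂⟩, hφz₂⟩ := hball (show ζ * w ∈ ball 0 δ by
    rw [mem_ball_zero_iff, norm_mul, hζ.norm'_eq_one (by omega), hw]; linarith)
  have hz : z₁ = z₂ :=
    hinj hz₁ hz₂ (by rw [hfz₁, hfz₂, hφz₁, hφz₂, mul_pow, hζ.pow_eq_one, one_mul])
  have hw0 : w ≠ 0 := by simp [w, hδ.ne']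
  have hζw : ζ * w = 1 * w := by rw [← hφz₂, ← hz, hφz₁, one_mul]
  exact hζ.ne_one (by omega) (mul_right_cancel₀ hw0 hζw)

theorem deriv_ne_zero_of_injOn {f : ℂ → ℂ} {U : Set ℂ} (hU : IsOpen U)
    (hf : DifferentiableOn ℂ f U) (hinj : InjOn f U) {c : ℂ} (hc : c ∈ U) :
    deriv f c ≠ 0 := by
  have hUc : U ∈ 𝓝 c := hU.mem_nhds hc
  have hF : AnalyticAt ℂ (fun z => f z - f c) c := (hf.analyticAt hUc).sub analyticAt_const
  have hord_top : analyticOrderAt (fun z => f z - f c) c ≠ ⊤ := by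
    intro htop
    have hnear : ∀ᶠ z in 𝓝[≠] c, f z - f c = 0 ∧ z ∈ U :=
      nhdsWithin_le_nhds ((analyticOrderAt_eq_top.mp htop).and hUc)
    obtain ⟨z, ⟨hfz, hzU⟩, hzc⟩ := (hnear.and self_mem_nhdsWithin).exists
    exact hzc (hinj hzU hc (sub_eq_zero.mp hfz))
  obtain ⟨n, hn⟩ := ENat.ne_top_iff_exists.mp hord_top
  have hn0 : n ≠ 0 := by
    rintro rfl
    exact analyticOrderAt_ne_zero.mpr ⟨hF, sub_self _⟩ hn.symm
  obtain ⟨φ, φ', hφ', hφ, hφc, hfφ⟩ := hF.exists_eventuallyEq_pow_of_analyticOrderAt hn0 hn.symm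
  intro hzero
  rcases (show n = 1 ∨ 2 ≤ n by omega) with rfl | hn2
  · have : deriv (fun z => f z - f c) c = φ' := by
      rw [hfφ.deriv_eq]
      simpa using hφ.hasDerivAt.deriv
    exact hφ' (by simpa [hzero] using this.symm)
  · exact not_injOn_of_eventuallyEq_pow hφ' hφ hφc hn2 hfφ hUc
      (fun z hz w hw h => hinj hz hw (sub_left_inj.mp h))

theorem hasDerivAt_invFunOn_of_bijOn {f : ℂ → ℂ} {U V : Set ℂ} (hU : IsOpen U) (hV : IsOpen V)
    (hf : DifferentiableOn ℂ f U) (hb : BijOn f U V) {w : ℂ} (hw : w ∈ V) :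
    HasDerivAt (Function.invFunOn f U) (deriv f (Function.invFunOn f U w))⁻¹ w := by
  set K := Function.invFunOn f U
  have hKU : K w ∈ U := hb.surjOn.mapsTo_invFunOn hw
  have hfK : ∀ v ∈ V, f (K v) = v := fun v hv => hb.invOn_invFunOn.2 hv
  have hderiv := (hf.differentiableAt (hU.mem_nhds hKU)).hasDerivAt
  have hne := deriv_ne_zero_of_injOn hU hf hb.injOn hKU
  have hstrict := (hf.analyticAt (hU.mem_nhds hKU)).hasStrictDerivAt
  -- `f` maps neighbourhoods of `K w` onto neighbourhoods of `w`, on which `K` undoes `f`.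
  have hcont : ContinuousAt K w := by
    intro N hN
    have hfN : f '' (N ∩ U) ∈ 𝓝 w := by
      rw [← hfK w hw, ← hstrict.map_nhds_eq hne]
      exact image_mem_map (inter_mem hN (hU.mem_nhds hKU))
    refine mem_map.mpr (mem_of_superset hfN ?_)
    rintro _ ⟨z, ⟨hzN, hzU⟩, rfl⟩
    have hKfz : K (f z) = z := hb.invOn_invFunOn.1 hzU
    rwa [mem_preimage, hKfz]
  exact hderiv.of_local_left_inverse hcont hne (eventually_of_mem (hV.mem_nhds hw) hfK)

theorem norm_deriv_eq_one_of_bijOn_ball {Φ : ℂ → ℂ} (hd : DifferentiableOn ℂ Φ (ball 0 1))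
    (hb : BijOn Φ (ball 0 1) (ball 0 1)) (h0 : Φ 0 = 0) : ‖deriv Φ 0‖ = 1 := by
  set K := Function.invFunOn Φ (ball (0 : ℂ) 1)
  have h01 : (0 : ℂ) ∈ ball (0 : ℂ) 1 := mem_ball_self one_pos
  have hK0 : K 0 = 0 := by simpa [h0] using hb.invOn_invFunOn.1 h01
  have hK : ∀ w ∈ ball (0 : ℂ) 1, HasDerivAt K (deriv Φ (K w))⁻¹ w := fun w hw =>
    hasDerivAt_invFunOn_of_bijOn isOpen_ball isOpen_ball hd hb hw
  have hKd : DifferentiableOn ℂ K (ball 0 1) := fun w hw =>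
    (hK w hw).differentiableAt.differentiableWithinAt
  have hΦ_le : ‖deriv Φ 0‖ ≤ 1 := norm_deriv_le_one_of_mapsTo_ball hd
    (by rw [h0]; exact hb.mapsTo.mono_right ball_subset_closedBall) one_pos
  have hK_le : ‖deriv K 0‖ ≤ 1 := norm_deriv_le_one_of_mapsTo_ball hKd
    (by rw [hK0]; exact hb.surjOn.mapsTo_invFunOn.mono_right ball_subset_closedBall) one_pos
  rw [(hK 0 h01).deriv, hK0, norm_inv] at hK_le
  have hpos : 0 < ‖deriv Φ 0‖ :=
    norm_pos_iff.mpr (deriv_ne_zero_of_injOn isOpen_ball hd hb.injOn h01)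
  exact le_antisymm hΦ_le ((inv_le_one₀ hpos).mp hK_le)

open ComplexConjugate

theorem mem_UHP {z : ℂ} : z ∈ UHP ↔ 0 < z.im := Iff.rfl

def uhpToDisk (w z : ℂ) : ℂ := (z - w) / (z - conj w)

theorem norm_sub_conj_sq_sub_norm_sub_sq (z w : ℂ) :
    ‖z - conj w‖ ^ 2 - ‖z - w‖ ^ 2 = 4 * z.im * w.im := by
  simp only [Complex.sq_norm, Complex.normSq_apply, Complex.sub_re, Complex.sub_im,
    Complex.conj_re, Complex.conj_im]
  ring

theorem im_pos_iff_norm_sub_lt_norm_sub_conj {z w : ℂ} (hw : 0 < w.im) :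
    0 < z.im ↔ ‖z - w‖ < ‖z - conj w‖ := by
  have key := norm_sub_conj_sq_sub_norm_sub_sq z w
  rw [← pow_lt_pow_iff_left₀ (norm_nonneg _) (norm_nonneg _) two_ne_zero]
  constructor <;> intro h <;> nlinarith

theorem sub_conj_ne_zero_of_im_pos {z w : ℂ} (hz : 0 < z.im) (hw : 0 < w.im) : z - conj w ≠ 0 := by
  intro h
  have := congrArg im h
  simp only [Complex.sub_im, Complex.conj_im, Complex.zero_im] at this
  linarith

theorem bijOn_uhpToDisk {w : ℂ} (hw : 0 < w.im) : BijOn (uhpToDisk w) UHP (ball 0 1) := by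
  have hww : w - conj w ≠ 0 := sub_conj_ne_zero_of_im_pos hw hw
  have h1u : ∀ u ∈ ball (0 : ℂ) 1, 1 - u ≠ 0 := fun u hu h => by
    simp [← sub_eq_zero.mp h] at hu
  -- the inverse map is `u ↦ (w - w̄ u) / (1 - u)`
  have hinv_sub_conj : ∀ u ∈ ball (0 : ℂ) 1,
      (w - conj w * u) / (1 - u) - conj w = (w - conj w) / (1 - u) := fun u hu => by
    have := h1u u hu
    field_simp
    ring
  refine InvOn.bijOn (f' := fun u => (w - conj w * u) / (1 - u)) ⟨fun z hz => ?_, fun u hu => ?_⟩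
    (fun z hz => ?_) (fun u hu => ?_)
  · have hz' := sub_conj_ne_zero_of_im_pos hz hw
    have h1 : 1 - uhpToDisk w z = (w - conj w) / (z - conj w) := by
      simp only [uhpToDisk]; field_simp; ring
    show (w - conj w * uhpToDisk w z) / (1 - uhpToDisk w z) = z
    rw [h1, div_eq_iff (div_ne_zero hww hz'), uhpToDisk]
    field_simp
    ring
  · have := h1u u hu
    simp only [uhpToDisk, hinv_sub_conj u hu]
    field_simp
    ring
  · have hlt := (im_pos_iff_norm_sub_lt_norm_sub_conj hw).mp hz
    rw [mem_ball_zero_iff, uhpToDisk, norm_div, div_lt_one ((norm_nonneg _).trans_lt hlt)]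
    exact hlt
  · have hu1 := h1u u hu
    have hne : (w - conj w * u) / (1 - u) - conj w ≠ 0 := by
      rw [hinv_sub_conj u hu]
      exact div_ne_zero hww hu1
    have hsub : (w - conj w * u) / (1 - u) - w = u * ((w - conj w * u) / (1 - u) - conj w) := by
      rw [hinv_sub_conj u hu]
      field_simp
      ring
    rw [mem_UHP, im_pos_iff_norm_sub_lt_norm_sub_conj hw, hsub, norm_mul]
    exact mul_lt_of_lt_one_left (norm_pos_iff.mpr hne) (mem_ball_zero_iff.mp hu)

theorem hasDerivAt_uhpToDisk {w : ℂ} (hw : 0 < w.im) :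
    HasDerivAt (uhpToDisk w) (w - conj w)⁻¹ w := by
  have hww : w - conj w ≠ 0 := sub_conj_ne_zero_of_im_pos hw hw
  refine (((hasDerivAt_id' w).sub_const w).fun_div ((hasDerivAt_id' w).sub_const (conj w))
    hww).congr_deriv ?_
  rw [one_mul, sub_self, zero_mul, sub_zero]
  field_simp

theorem differentiableOn_uhpToDisk {w : ℂ} (hw : 0 < w.im) :
    DifferentiableOn ℂ (uhpToDisk w) UHP := fun _ hz =>
  ((differentiableAt_id.sub_const w).div (differentiableAt_id.sub_const _)
    (sub_conj_ne_zero_of_im_pos hz hw)).differentiableWithinAt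

theorem norm_deriv_mul_norm_deriv_eq_two_im {U : Set ℂ} {g f : ℂ → ℂ} {z₀ : ℂ} (hU : IsOpen U)
    (hg : IsConformalMapOn g U UHP) (hf : IsConformalMapOn f unitDisk U) (hf0 : f 0 = z₀) :
    ‖deriv g z₀‖ * ‖deriv f 0‖ = 2 * (g z₀).im := by
  obtain ⟨hgd, hgb⟩ := hg
  obtain ⟨hfd, hfb⟩ := hf
  have h0 : (0 : ℂ) ∈ unitDisk := mem_ball_self one_pos
  have hz₀ : z₀ ∈ U := hf0 ▸ hfb.mapsTo h0
  set w := g z₀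
  have hw : 0 < w.im := hgb.mapsTo hz₀
  have hΦ : ‖deriv (uhpToDisk w ∘ g ∘ f) 0‖ = 1 :=
    norm_deriv_eq_one_of_bijOn_ball
      ((differentiableOn_uhpToDisk hw).comp (hgd.comp hfd hfb.mapsTo) (hgb.mapsTo.comp hfb.mapsTo))
      ((bijOn_uhpToDisk hw).comp (hgb.comp hfb))
      (by simp [hf0, w, uhpToDisk])
  have hchain : HasDerivAt (uhpToDisk w ∘ g ∘ f) ((w - conj w)⁻¹ * (deriv g z₀ * deriv f 0)) 0 := by
    have hfd0 := (hfd.differentiableAt (isOpen_ball.mem_nhds h0)).hasDerivAt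
    have hgd0 : HasDerivAt g (deriv g z₀) (f 0) :=
      hf0 ▸ (hgd.differentiableAt (hU.mem_nhds hz₀)).hasDerivAt
    have hT : HasDerivAt (uhpToDisk w) (w - conj w)⁻¹ (g (f 0)) := hf0 ▸ hasDerivAt_uhpToDisk hw
    exact hT.comp 0 (hgd0.comp 0 hfd0)
  rw [hchain.deriv, norm_mul, norm_inv, norm_mul, Complex.sub_conj, norm_mul, Complex.norm_I,
    mul_one, Complex.norm_real, Real.norm_of_nonneg (by positivity)] at hΦ
  field_simp at hΦ
  linarith

theorem Bornology.cobounded_inf_principal_diff {α : Type*} [Bornology α] {s A : Set α}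
    (hA : IsBounded A) : cobounded α ⊓ 𝓟 (s \ A) = cobounded α ⊓ 𝓟 s := by
  rw [sdiff_eq, ← inf_principal, inf_comm (𝓟 s), ← inf_assoc,
    inf_of_le_left (le_principal_iff.mpr (isBounded_def.mp hA))]

theorem im_gt_of_mem_ball_I_mul {y : ℝ} {z : ℂ} (hz : z ∈ ball (I * y) (y / 2)) :
    y / 2 < z.im := by
  have h := (Complex.abs_im_le_norm (z - I * y)).trans_lt (mem_ball_iff_norm.mp hz)
  simp only [Complex.sub_im, Complex.mul_im, Complex.I_re, Complex.I_im, Complex.ofReal_re,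
    Complex.ofReal_im] at h
  linarith [(abs_lt.mp h).1]

theorem eventually_ball_I_mul_subset {t : Set ℂ} (ht : t ∈ cobounded ℂ ⊓ 𝓟 UHP) :
    ∀ᶠ y : ℝ in atTop, ball (I * y) (y / 2) ⊆ t := by
  obtain ⟨R, -, hR⟩ := (hasBasis_cobounded_compl_closedBall (0 : ℂ)).mem_iff.mp
    (mem_inf_principal.mp ht)
  filter_upwards [eventually_ge_atTop (2 * |R|)] with y hy z hz
  have him := im_gt_of_mem_ball_I_mul hz
  refine hR ?_ (show 0 < z.im by linarith [abs_nonneg R])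
  rw [mem_compl_iff, mem_closedBall_zero_iff, not_le]
  linarith [le_abs_self R, Complex.abs_im_le_norm z, le_abs_self z.im]

theorem tendsto_I_mul_cobounded_inf_UHP :
    Tendsto (fun y : ℝ => I * y) atTop (cobounded ℂ ⊓ 𝓟 UHP) := fun t ht => by
  rw [mem_map]
  filter_upwards [eventually_ball_I_mul_subset ht, eventually_gt_atTop (0 : ℝ)] with y hy hy0
  exact hy (mem_ball_self (by linarith))

theorem tendsto_mul_deriv_I_mul_of_tendsto {F : ℂ → ℂ} {c : ℂ} {t : Set ℂ}
    (ht : t ∈ cobounded ℂ ⊓ 𝓟 UHP) (hF : DifferentiableOn ℂ F t)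
    (hlim : Tendsto F (cobounded ℂ ⊓ 𝓟 UHP) (𝓝 c)) :
    Tendsto (fun y : ℝ => (y : ℂ) * deriv F (I * y)) atTop (𝓝 0) := by
  rw [Metric.tendsto_nhds]
  intro ε hε
  have hnear : t ∩ {z | dist (F z) c < ε / 8} ∈ cobounded ℂ ⊓ 𝓟 UHP :=
    inter_mem ht (hlim (ball_mem_nhds c (by positivity)))
  filter_upwards [eventually_ball_I_mul_subset hnear, eventually_gt_atTop 0] with y hy hy0
  -- Cauchy estimate on the disk of radius `y / 2`, where `F` stays `ε / 8`-close to `c`.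
  have hmaps : MapsTo F (ball (I * y) (y / 2)) (closedBall (F (I * y)) (ε / 4)) := fun z hz => by
    have h₁ : dist (F z) c < ε / 8 := (hy hz).2
    have h₂ : dist (F (I * y)) c < ε / 8 := (hy (mem_ball_self (by linarith))).2
    rw [mem_closedBall]
    linarith [dist_triangle_right (F z) (F (I * y)) c]
  have hcauchy := norm_deriv_le_div_of_mapsTo_ball (hF.mono fun z hz => (hy hz).1) hmaps
    (by linarith)
  rw [dist_zero_right, norm_mul, Complex.norm_real, Real.norm_of_nonneg hy0.le]
  calc y * ‖deriv F (I * y)‖ ≤ y * (ε / 4 / (y / 2)) := by gcongr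
    _ = ε / 2 := by field_simp; ring
    _ < ε := by linarith

section HydroExpansion

variable {g : ℂ → ℂ} {c : ℂ}

theorem tendsto_mul_sub_im_g_I_mul
    (hlim : Tendsto (fun z => z * (g z - z)) (cobounded ℂ ⊓ 𝓟 UHP) (𝓝 c)) :
    Tendsto (fun y : ℝ => y * (y - (g (I * y)).im)) atTop (𝓝 c.re) := by
  have hre := (Complex.continuous_re.tendsto c).comp (hlim.comp tendsto_I_mul_cobounded_inf_UHP)
  refine hre.congr fun y => ?_
  simp only [Function.comp_apply, Complex.mul_re, Complex.sub_re, Complex.sub_im, Complex.mul_im,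
    Complex.I_re, Complex.I_im, Complex.ofReal_re, Complex.ofReal_im]
  ring

theorem tendsto_sq_mul_deriv_g_I_mul_sub_one {t : Set ℂ} (ht : t ∈ cobounded ℂ ⊓ 𝓟 UHP)
    (hg : DifferentiableOn ℂ g t)
    (hlim : Tendsto (fun z => z * (g z - z)) (cobounded ℂ ⊓ 𝓟 UHP) (𝓝 c)) :
    Tendsto (fun y : ℝ => (y : ℂ) ^ 2 * (deriv g (I * y) - 1)) atTop (𝓝 c) := by
  set F := fun z => z * (g z - z)
  have hF : DifferentiableOn ℂ F t := differentiableOn_id.mul (hg.sub differentiableOn_id)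
  have hlim' : Tendsto (fun y : ℝ => F (I * y) - I * ((y : ℂ) * deriv F (I * y))) atTop
      (𝓝 (c - I * 0)) :=
    (hlim.comp tendsto_I_mul_cobounded_inf_UHP).sub
      ((tendsto_mul_deriv_I_mul_of_tendsto ht hF hlim).const_mul I)
  rw [mul_zero, sub_zero] at hlim'
  refine hlim'.congr' ?_
  filter_upwards [eventually_ball_I_mul_subset ht, eventually_gt_atTop 0] with y hy hy0
  have hgy : DifferentiableAt ℂ g (I * y) :=
    hg.differentiableAt (mem_of_superset (ball_mem_nhds _ (by linarith)) hy)
  -- `z ^ 2 (g' z - 1) = z F' z - F z` with `z = I y`, `z ^ 2 = - y ^ 2`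
  have hFy :=
    ((hasDerivAt_id' (I * y)).fun_mul (hgy.hasDerivAt.fun_sub (hasDerivAt_id' (I * y)))).deriv
  simp only [F, hFy]
  linear_combination -(y : ℂ) ^ 2 * (deriv g (I * y) - 1) * Complex.I_sq

end HydroExpansion

theorem tendsto_zero_of_tendsto_sq_mul {𝕜 : Type*} [RCLike 𝕜] {u : ℝ → 𝕜} {c : 𝕜}
    (hu : Tendsto (fun y : ℝ => (y : 𝕜) ^ 2 * u y) atTop (𝓝 c)) : Tendsto u atTop (𝓝 0) := by
  have hinv : Tendsto (fun y : ℝ => ((y : 𝕜) ^ 2)⁻¹) atTop (𝓝 0) := by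
    have := (RCLike.continuous_ofReal (K := 𝕜)).tendsto 0 |>.comp
      (tendsto_pow_atTop (two_ne_zero)).inv_tendsto_atTop
    simpa [Function.comp_def] using this
  refine (by simpa using hinv.mul hu : Tendsto _ atTop (𝓝 (0 : 𝕜))).congr' ?_
  filter_upwards [eventually_ne_atTop 0] with y hy
  have hy' : (y : 𝕜) ≠ 0 := RCLike.ofReal_ne_zero.mpr hy
  field_simp

theorem tendsto_sq_mul_norm_sub_one {v : ℝ → ℂ} {c : ℂ}
    (hv : Tendsto (fun y : ℝ => (y : ℂ) ^ 2 * (v y - 1)) atTop (𝓝 c)) :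
    Tendsto (fun y : ℝ => y ^ 2 * (‖v y‖ - 1)) atTop (𝓝 c.re) := by
  have hv1 : Tendsto (fun y => v y - 1) atTop (𝓝 0) := tendsto_zero_of_tendsto_sq_mul hv
  have hnorm : Tendsto (fun y => ‖v y‖) atTop (𝓝 1) := by
    simpa using (hv1.add_const 1).norm
  -- `‖v‖² - 1 = 2 Re (v - 1) + ‖v - 1‖²`, and `y² ‖v - 1‖² = ‖y² (v - 1)‖ ‖v - 1‖ → 0`.
  have hlim : Tendsto (fun y : ℝ => (2 * ((y : ℂ) ^ 2 * (v y - 1)).re +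
      ‖(y : ℂ) ^ 2 * (v y - 1)‖ * ‖v y - 1‖) / (‖v y‖ + 1)) atTop
      (𝓝 ((2 * c.re + ‖c‖ * 0) / (1 + 1))) :=
    ((((Complex.continuous_re.tendsto c).comp hv).const_mul 2).add
      (hv.norm.mul (by simpa using hv1.norm))).div (hnorm.add_const 1) (by norm_num)
  rw [mul_zero, add_zero, show (1 : ℝ) + 1 = 2 by norm_num, mul_div_cancel_left₀ _ two_ne_zero]
    at hlim
  refine hlim.congr fun y => ?_
  rw [eq_comm, eq_div_iff (by positivity)]
  have hsq : ‖v y‖ ^ 2 = 1 + 2 * (v y - 1).re + ‖v y - 1‖ ^ 2 := by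
    simp only [Complex.sq_norm, Complex.normSq_apply, Complex.sub_re, Complex.sub_im,
      Complex.one_re, Complex.one_im]
    ring
  have hre : ((y : ℂ) ^ 2 * (v y - 1)).re = y ^ 2 * (v y - 1).re := by
    rw [← Complex.ofReal_pow, Complex.re_ofReal_mul]
  rw [hre, norm_mul, norm_pow, Complex.norm_real, Real.norm_eq_abs, sq_abs]
  linear_combination y ^ 2 * hsq

theorem tendsto_sq_mul_one_sub_div_two_mul {a b r : ℝ → ℝ} {h : ℝ}
    (ha : Tendsto (fun y => y ^ 2 * (a y - 1)) atTop (𝓝 h))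
    (hb : Tendsto (fun y => y * (y - b y)) atTop (𝓝 h))
    (hab : ∀ᶠ y in atTop, a y * r y = 2 * b y) :
    Tendsto (fun y => y ^ 2 * (1 - r y / (2 * y))) atTop (𝓝 (2 * h)) := by
  have ha1 : Tendsto a atTop (𝓝 1) := by
    have := (tendsto_zero_of_tendsto_sq_mul (𝕜 := ℝ) (by simpa using ha)).add_const 1
    rw [zero_add] at this
    exact this.congr fun y => sub_add_cancel _ _
  have hlim := (ha.add hb).div ha1 one_ne_zero
  rw [div_one, ← two_mul] at hlim
  refine hlim.congr' ?_
  filter_upwards [hab, ha1.eventually (eventually_ne_nhds one_ne_zero), eventually_ne_atTop 0]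
    with y hy hay hy0
  have hr : r y = 2 * b y / a y := by rw [eq_div_iff hay, mul_comm, hy]
  rw [hr, Pi.div_apply]
  field_simp
  ring

/-- `hcap(A) = h` is witnessed by the hydrodynamically normalized map `g`, and
`crad(ℍ \ A, iy) = ‖(fy y)'(0)‖` by a conformal map `fy y : 𝔻 → ℍ \ A` with `fy y 0 = iy`. -/
theorem crad_expansion_at_infinity (A : Set ℂ) (g : ℂ → ℂ) (h : ℝ) (fy : ℝ → ℂ → ℂ)
    (hA : IsHull A) (hg : HasHcap A g h)
    (hfy : ∀ y : ℝ, Complex.I * (y : ℂ) ∈ UHP \ A →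
      IsConformalMapOn (fy y) unitDisk (UHP \ A) ∧ fy y 0 = Complex.I * (y : ℂ)) :
    Tendsto (fun y : ℝ => y ^ 2 * (1 - ‖deriv (fy y) 0‖ / (2 * y)))
      atTop (𝓝 (2 * h)) := by
  obtain ⟨-, hbd, hopen, -⟩ := hA
  obtain ⟨⟨hconf, -⟩, hlim⟩ := hg
  have hL := Bornology.cobounded_inf_principal_diff (s := UHP) hbd
  have hdom : UHP \ A ∈ cobounded ℂ ⊓ 𝓟 UHP := hL ▸ mem_inf_of_right (mem_principal_self _)
  rw [hL] at hlim
  have hcrad : ∀ᶠ y : ℝ in atTop,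
      ‖deriv g (I * y)‖ * ‖deriv (fy y) 0‖ = 2 * (g (I * y)).im := by
    filter_upwards [tendsto_I_mul_cobounded_inf_UHP hdom] with y hy
    exact norm_deriv_mul_norm_deriv_eq_two_im hopen hconf (hfy y hy).1 (hfy y hy).2
  have hderiv := tendsto_sq_mul_norm_sub_one
    (tendsto_sq_mul_deriv_g_I_mul_sub_one hdom hconf.1 hlim)
  have him := tendsto_mul_sub_im_g_I_mul hlim
  rw [Complex.ofReal_re] at hderiv him
  exact tendsto_sq_mul_one_sub_div_two_mul hderiv him hcrad

end
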